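/- arXiv:2303.09113 — 3 statements merged into one kernel-verified Lean document; each statement's English description precedes it below -/
import Mathlib

section
/- For every T ≥ 1, c · #{ t ∈ {1,…,T} : Q_t > 0 } ≤ Σ_{t=1}^{T} a_t. That is, the number of slots at whose end the processing queue is nonempty is at most the total arrived work divided by the capacity c; this bounds the number of slots an adversary can congest by its total budget of released blocks. -/
open Finset
open scoped Classical

/-! Each busy slot drains exactly `c` units of work from the queue, while an idle slot only
discards work. Hence `c · #busy + Q T` never exceeds the total arrivals, and `Q T ≥ 0`. -/

lemma ite_pos_add_max_sub_le {y : ℝ} (c : ℝ) (hy : 0 ≤ y) :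
    (if 0 < max (y - c) 0 then c else 0) + max (y - c) 0 ≤ y := by
  split_ifs with h
  · rw [max_eq_left (lt_max_iff.mp h |>.resolve_right (lt_irrefl 0)).le]
    linarith
  · rw [not_lt.mp h |>.antisymm (le_max_right _ _)]
    linarith

section Lindley

variable {c : ℝ} {a Q : ℕ → ℝ}

lemma lindley_nonneg (hQ0 : 0 ≤ Q 0) (hQ : ∀ t, Q (t + 1) = max (Q t + a (t + 1) - c) 0)
    (t : ℕ) : 0 ≤ Q t := by
  cases t with
  | zero => exact hQ0
  | succ t => rw [hQ]; exact le_max_right _ _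

lemma mul_card_busy_add_le (ha : ∀ r, 0 ≤ a r) (hQ0 : 0 ≤ Q 0)
    (hQ : ∀ t, Q (t + 1) = max (Q t + a (t + 1) - c) 0) (T : ℕ) :
    c * #{t ∈ Icc 1 T | 0 < Q t} + Q T ≤ Q 0 + ∑ t ∈ Icc 1 T, a t := by
  rw [card_filter, Nat.cast_sum, mul_sum]
  induction T with
  | zero => simp
  | succ n ih =>
    have hstep : (if 0 < Q (n + 1) then c else 0) + Q (n + 1) ≤ Q n + a (n + 1) := by
      rw [hQ]
      exact ite_pos_add_max_sub_le c (add_nonneg (lindley_nonneg hQ0 hQ n) (ha _))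
    rw [sum_Icc_succ_top (by omega), sum_Icc_succ_top (by omega)]
    push_cast [mul_ite, mul_one, mul_zero] at ih hstep ⊢
    linarith

end Lindley

theorem busy_slots_bound_general
    (c : ℝ) (a : ℕ → ℝ) (ha : ∀ r, 0 ≤ a r)
    (Q : ℕ → ℝ) (hQ0 : Q 0 = 0)
    (hQ : ∀ t : ℕ, Q (t + 1) = max (Q t + a (t + 1) - c) 0)
    (T : ℕ) :
    c * (((Finset.Icc 1 T).filter (fun t => 0 < Q t)).card : ℝ)
      ≤ ∑ t ∈ Finset.Icc 1 T, a t := by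
  have hQ0' : 0 ≤ Q 0 := hQ0.ge
  have hinv := mul_card_busy_add_le ha hQ0' hQ T
  have hQT := lindley_nonneg hQ0' hQ T
  rw [hQ0, zero_add] at hinv
  linarith

/-- The number of slots in `{1, …, T}` at whose end the processing queue is nonempty
(`Q t > 0`) is at most the total arrived work divided by the capacity `c`:
`c * #{t ∈ {1,…,T} : Q t > 0} ≤ ∑_{t=1}^{T} a t`. -/
theorem busy_slots_bound
    (c : ℝ) (hc : 0 < c) (a : ℕ → ℝ) (ha : ∀ r, 0 ≤ a r)
    (Q : ℕ → ℝ) (hQ0 : Q 0 = 0)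
    (hQ : ∀ t : ℕ, Q (t + 1) = max (Q t + a (t + 1) - c) 0)
    (T : ℕ) (hT : 1 ≤ T) :
    c * (((Finset.Icc 1 T).filter (fun t => 0 < Q t)).card : ℝ)
      ≤ ∑ t ∈ Finset.Icc 1 T, a t :=
  busy_slots_bound_general c a ha Q hQ0 hQ T
end

section
/- If β ∈ [0, 1/2), then the probability that index 0 is a pivot is at least (1 − 2β)²; in particular it is strictly positive. -/
/-!
Let `ρ = β / (1 - β)`. A walk with independent `±1` steps, up with probability `1 - β`, ever
falls to level `-m` with probability at most `ρ ^ m`: conditioning on the first step, `ρ ^ m`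
solves the recursion `u m = β u (m - 1) + (1 - β) u (m + 1)`, and induction on the time horizon
turns this into a bound. Index `0` is a pivot as soon as every forward sum `X 0 + ⋯ + X n` is
positive and every backward sum `X (-n) + ⋯ + X (-1)` is nonnegative. The forward walk fails
with probability at most `β + (1 - β) ρ = 2β`, the backward one with probability at most
`ρ ≤ 2β`, and the two walks use disjoint coordinates, hence are independent.
-/

open MeasureTheory ProbabilityTheory Finset

/-- An index `t ∈ ℤ` is a *pivot* (for a realization `x : ℤ → ℤ` of the ±1-valued
sequence) if every finite interval of consecutive integers containing `t` has a
strictly positive sum, i.e., strictly more honest (`+1`) than adversarial (`−1`)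
block production opportunities. -/
def IsPivot (x : ℤ → ℤ) (t : ℤ) : Prop :=
  ∀ i j : ℤ, i ≤ t → t ≤ j → 0 < ∑ k ∈ Finset.Icc i j, x k

open scoped ENNReal

lemma measurable_iSup_comap {Ω ι β : Type*} {mβ : MeasurableSpace β} {X : ι → Ω → β}
    {S : Set ι} {i : ι} (hi : i ∈ S) :
    Measurable[⨆ j ∈ S, mβ.comap (X j)] (X i) :=
  measurable_iff_comap_le.2 <| le_iSup₂ (f := fun j (_ : j ∈ S) => mβ.comap (X j)) i hi

lemma ProbabilityTheory.iIndepFun.measure_inter_eq_mul_of_disjoint {Ω ι β : Type*}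
    [MeasurableSpace Ω] {mβ : MeasurableSpace β} {μ : Measure Ω} {X : ι → Ω → β}
    (hX : iIndepFun X μ) (hmeas : ∀ i, Measurable (X i)) {S T : Set ι} (hST : Disjoint S T)
    {A B : Set Ω} (hA : MeasurableSet[⨆ i ∈ S, mβ.comap (X i)] A)
    (hB : MeasurableSet[⨆ i ∈ T, mβ.comap (X i)] B) :
    μ (A ∩ B) = μ A * μ B :=
  (Indep_iff _ _ _).1 (indep_iSup_of_disjoint (fun i => (hmeas i).comap_le)
    ((iIndepFun_iff_iIndep _ _ _).1 hX) hST) A B hA hB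

lemma ae_eq_one_or_eq_neg_one {Ω : Type*} [MeasurableSpace Ω] {μ : Measure Ω}
    [IsProbabilityMeasure μ] {Z : Ω → ℤ} {p q : ℝ≥0∞} (hZ : Measurable Z) (hpq : p + q = 1)
    (hup : μ {ω | Z ω = 1} = q) (hdown : μ {ω | Z ω = -1} = p) :
    ∀ᵐ ω ∂μ, Z ω = 1 ∨ Z ω = -1 := by
  have hmeas : MeasurableSet {ω | Z ω = 1 ∨ Z ω = -1} :=
    hZ (MeasurableSet.of_discrete (s := {1, -1}))
  have hdisj : Disjoint {ω | Z ω = 1} {ω | Z ω = -1} :=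
    Set.disjoint_left.2 fun ω h1 h2 => by simp_all
  rw [ae_iff, ← Set.compl_ofPred, prob_compl_eq_zero_iff hmeas, Set.ofPred_or,
    measure_union hdisj (hZ (MeasurableSet.of_discrete (s := {-1}))), hup, hdown, add_comm, hpq]

lemma pow_succ_eq_mul_pow_add_mul_pow {R : Type*} [CommSemiring R] {p q ρ : R}
    (hpq : p + q = 1) (hρ : q * ρ = p) (m : ℕ) :
    ρ ^ (m + 1) = p * ρ ^ m + q * ρ ^ (m + 2) :=
  calc ρ ^ (m + 1) = (p + q) * ρ ^ (m + 1) := by rw [hpq, one_mul]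
    _ = p * ρ ^ m + p * ρ ^ (m + 1) := by rw [← hρ]; ring
    _ = p * ρ ^ m + q * ρ ^ (m + 2) := by rw [← hρ]; ring

lemma measure_setOf_exists_le_of_forall_le {Ω : Type*} [MeasurableSpace Ω] {μ : Measure Ω}
    {P : ℕ → Ω → Prop} {c : ℝ≥0∞} (h : ∀ N, μ {ω | ∃ n ≤ N, P n ω} ≤ c) :
    μ {ω | ∃ n, P n ω} ≤ c := by
  have hunion : {ω | ∃ n, P n ω} = ⋃ N, {ω | ∃ n ≤ N, P n ω} := by
    ext ω
    simp only [Set.mem_ofPred_eq, Set.mem_iUnion]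
    exact ⟨fun ⟨n, hn⟩ => ⟨n, n, le_rfl, hn⟩, fun ⟨_, n, _, hn⟩ => ⟨n, hn⟩⟩
  have hmono : Monotone fun N => {ω | ∃ n ≤ N, P n ω} :=
    fun _ _ hNM _ ⟨n, hn, hP⟩ => ⟨n, hn.trans hNM, hP⟩
  rw [hunion, hmono.measure_iUnion]
  exact iSup_le h

section GamblersRuin

variable {Ω : Type*} {Y : ℕ → Ω → ℤ}

def ruinWithin (Y : ℕ → Ω → ℤ) (N : ℕ) (m : ℤ) : Set Ω :=
  {ω | ∃ n ≤ N, ∑ k ∈ range n, Y k ω ≤ -m}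

lemma measurableSet_ruinWithin {M : MeasurableSpace Ω} (hY : ∀ k, Measurable[M] (Y k))
    (N : ℕ) (m : ℤ) : MeasurableSet[M] (ruinWithin Y N m) := by
  simp only [ruinWithin, Set.ofPred_exists, Set.ofPred_and]
  exact MeasurableSet.iUnion fun n => (MeasurableSet.const (n ≤ N)).inter
    (Finset.measurable_sum _ (fun k _ => hY k) measurableSet_Iic)

lemma measurableSet_exists_sum_range_le {M : MeasurableSpace Ω} (hY : ∀ k, Measurable[M] (Y k))
    (len : ℕ → ℕ) (c : ℤ) : MeasurableSet[M] {ω | ∃ n, ∑ k ∈ range (len n), Y k ω ≤ c} := by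
  simp only [Set.ofPred_exists]
  exact MeasurableSet.iUnion fun n => Finset.measurable_sum _ (fun k _ => hY k) measurableSet_Iic

variable [MeasurableSpace Ω] {μ : Measure Ω} [IsProbabilityMeasure μ] {p q ρ : ℝ≥0∞}
  (hmeas : ∀ k, Measurable (Y k)) (hindep : iIndepFun Y μ) (hpq : p + q = 1)

include hmeas hindep hpq

/-- First-step analysis: a.s. `Y 0 = ±1`, independently of the walk `fun k => Y (k + 1)`. -/
lemma measure_exists_sum_range_succ_le_le (hup : μ {ω | Y 0 ω = 1} = q)
    (hdown : μ {ω | Y 0 ω = -1} = p) (N : ℕ) (m : ℤ) :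
    μ {ω | ∃ n ≤ N, ∑ k ∈ range (n + 1), Y k ω ≤ -m} ≤
      p * μ (ruinWithin (fun k => Y (k + 1)) N (m - 1)) +
        q * μ (ruinWithin (fun k => Y (k + 1)) N (m + 1)) := by
  have hfirst (c l : ℤ) :
      μ ({ω | Y 0 ω = c} ∩ ruinWithin (fun k => Y (k + 1)) N l) =
        μ {ω | Y 0 ω = c} * μ (ruinWithin (fun k => Y (k + 1)) N l) :=
    hindep.measure_inter_eq_mul_of_disjoint hmeas
      (S := {0}) (T := Set.range Nat.succ) (by simp)
      (measurable_iSup_comap (X := Y) (Set.mem_singleton 0) (measurableSet_singleton c))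
      (measurableSet_ruinWithin (fun k => measurable_iSup_comap (X := Y) (Set.mem_range_self k))
        N l)
  have hsplit : {ω | ∃ n ≤ N, ∑ k ∈ range (n + 1), Y k ω ≤ -m} ≤ᵐ[μ]
      ({ω | Y 0 ω = -1} ∩ ruinWithin (fun k => Y (k + 1)) N (m - 1) ∪
        {ω | Y 0 ω = 1} ∩ ruinWithin (fun k => Y (k + 1)) N (m + 1) : Set Ω) := by
    filter_upwards [ae_eq_one_or_eq_neg_one (hmeas 0) hpq hup hdown] with ω hω
    rintro ⟨n, hn, hsum⟩
    rw [sum_range_succ'] at hsum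
    rcases hω with h | h
    · exact Or.inr ⟨h, n, hn, by beta_reduce; omega⟩
    · exact Or.inl ⟨h, n, hn, by beta_reduce; omega⟩
  calc _ ≤ _ := measure_mono_ae hsplit
    _ ≤ _ := measure_union_le _ _
    _ = _ := by rw [hfirst, hfirst, hup, hdown]

theorem measure_ruinWithin_le (hρ : q * ρ = p) (hup : ∀ k, μ {ω | Y k ω = 1} = q)
    (hdown : ∀ k, μ {ω | Y k ω = -1} = p) (N m : ℕ) :
    μ (ruinWithin Y N m) ≤ ρ ^ m := by
  induction N generalizing Y m with
  | zero =>
    rcases m with _ | m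
    · simpa using prob_le_one
    · have hempty : ruinWithin Y 0 (m + 1 : ℕ) = ∅ := by
        ext ω; simp [ruinWithin]; omega
      rw [hempty, measure_empty]
      exact zero_le
  | succ N ih =>
    rcases m with _ | m
    · simpa using prob_le_one
    have hfirst_step : ruinWithin Y (N + 1) (m + 1 : ℕ) ⊆
        {ω | ∃ n ≤ N, ∑ k ∈ range (n + 1), Y k ω ≤ -((m + 1 : ℕ) : ℤ)} := by
      rintro ω ⟨_ | n, hn, hsum⟩
      · simp at hsum; omega
      · exact ⟨n, by omega, hsum⟩
    have ih_shift (l : ℕ) : μ (ruinWithin (fun k => Y (k + 1)) N l) ≤ ρ ^ l :=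
      ih (fun k => hmeas (k + 1)) (hindep.precomp Nat.succ_injective) (fun k => hup (k + 1))
        (fun k => hdown (k + 1)) l
    calc μ (ruinWithin Y (N + 1) (m + 1 : ℕ))
        ≤ μ {ω | ∃ n ≤ N, ∑ k ∈ range (n + 1), Y k ω ≤ -((m + 1 : ℕ) : ℤ)} :=
          measure_mono hfirst_step
      _ ≤ p * μ (ruinWithin (fun k => Y (k + 1)) N (m : ℕ)) +
            q * μ (ruinWithin (fun k => Y (k + 1)) N (m + 2 : ℕ)) := by
          have h := measure_exists_sum_range_succ_le_le hmeas hindep hpq (hup 0) (hdown 0) N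
            ((m + 1 : ℕ) : ℤ)
          rwa [show ((m + 1 : ℕ) : ℤ) - 1 = (m : ℕ) by push_cast; ring,
            show ((m + 1 : ℕ) : ℤ) + 1 = (m + 2 : ℕ) by push_cast; ring] at h
      _ ≤ p * ρ ^ m + q * ρ ^ (m + 2) := by gcongr <;> exact ih_shift _
      _ = ρ ^ (m + 1) := (pow_succ_eq_mul_pow_add_mul_pow hpq hρ m).symm

theorem measure_exists_sum_range_le (hρ : q * ρ = p) (hup : ∀ k, μ {ω | Y k ω = 1} = q)
    (hdown : ∀ k, μ {ω | Y k ω = -1} = p) (m : ℕ) :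
    μ {ω | ∃ n, ∑ k ∈ range n, Y k ω ≤ -(m : ℤ)} ≤ ρ ^ m :=
  measure_setOf_exists_le_of_forall_le fun N =>
    measure_ruinWithin_le hmeas hindep hpq hρ hup hdown N m

theorem measure_exists_sum_range_succ_nonpos_le (hρ : q * ρ = p)
    (hup : ∀ k, μ {ω | Y k ω = 1} = q) (hdown : ∀ k, μ {ω | Y k ω = -1} = p) :
    μ {ω | ∃ n, ∑ k ∈ range (n + 1), Y k ω ≤ 0} ≤ 2 * p :=
  measure_setOf_exists_le_of_forall_le fun N => calc
    μ {ω | ∃ n ≤ N, ∑ k ∈ range (n + 1), Y k ω ≤ 0}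
      ≤ p * μ (ruinWithin (fun k => Y (k + 1)) N (0 - 1)) +
          q * μ (ruinWithin (fun k => Y (k + 1)) N (0 + 1)) := by
        simpa using measure_exists_sum_range_succ_le_le hmeas hindep hpq (hup 0) (hdown 0) N 0
    _ ≤ p * 1 + q * ρ ^ 1 := by
        gcongr
        · exact prob_le_one
        · exact_mod_cast measure_ruinWithin_le (fun k => hmeas (k + 1))
            (hindep.precomp Nat.succ_injective) hpq hρ (fun k => hup (k + 1))
            (fun k => hdown (k + 1)) N 1
    _ = 2 * p := by rw [mul_one, pow_one, hρ, two_mul]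

end GamblersRuin

lemma sum_Icc_neg_natCast_natCast (x : ℤ → ℤ) (a b : ℕ) :
    ∑ k ∈ Icc (-(b : ℤ)) a, x k = ∑ k ∈ range b, x (-1 - k) + ∑ k ∈ range (a + 1), x k := by
  have hsplit : Icc (-(b : ℤ)) a = Ico (-(b : ℤ)) 0 ∪ Icc 0 (a : ℤ) := by
    ext k; simp only [mem_union, mem_Icc, mem_Ico]; omega
  rw [hsplit, sum_union]
  · congr 1
    · refine (sum_nbij' (fun k : ℕ => -1 - (k : ℤ)) (fun k => (-1 - k).toNat)
        ?_ ?_ ?_ ?_ ?_).symm <;> intro k hk <;> simp at hk ⊢ <;> omega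
    · refine (sum_nbij' (fun k : ℕ => (k : ℤ)) Int.toNat ?_ ?_ ?_ ?_ ?_).symm <;>
        intro k hk <;> simp at hk ⊢ <;> omega
  · exact disjoint_left.2 fun k h1 h2 => by simp at h1 h2; omega

lemma isPivot_zero_of_forall_sum_pos (x : ℤ → ℤ)
    (hfwd : ∀ n : ℕ, 0 < ∑ k ∈ range (n + 1), x k)
    (hbwd : ∀ n : ℕ, 0 ≤ ∑ k ∈ range n, x (-1 - k)) : IsPivot x 0 := by
  intro i j hi hj
  lift j to ℕ using hj
  obtain ⟨b, rfl⟩ : ∃ b : ℕ, i = -b := ⟨i.natAbs, by omega⟩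
  rw [sum_Icc_neg_natCast_natCast]
  linarith [hfwd j, hbwd b]

theorem measure_isPivot_zero_ge {Ω : Type*} [MeasurableSpace Ω] {μ : Measure Ω}
    [IsProbabilityMeasure μ] {X : ℤ → Ω → ℤ} {p q ρ : ℝ≥0∞}
    (hmeas : ∀ k, Measurable (X k)) (hindep : iIndepFun X μ) (hpq : p + q = 1)
    (hρ : q * ρ = p) (hup : ∀ k, μ {ω | X k ω = 1} = q) (hdown : ∀ k, μ {ω | X k ω = -1} = p) :
    (1 - 2 * p) * (1 - ρ) ≤ μ {ω | IsPivot (fun k => X k ω) 0} := by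
  set F := {ω | ∃ n, ∑ k ∈ range (n + 1), X k ω ≤ 0}
  set B := {ω | ∃ n, ∑ k ∈ range n, X (-1 - k) ω ≤ -1}
  have hF : μ F ≤ 2 * p :=
    measure_exists_sum_range_succ_nonpos_le (fun k => hmeas k)
      (hindep.precomp Nat.cast_injective) hpq hρ (fun k => hup k) (fun k => hdown k)
  have hB : μ B ≤ ρ := by
    simpa [B] using measure_exists_sum_range_le (fun k => hmeas _)
      (hindep.precomp (fun a b h => by simpa using h)) hpq hρ (fun k => hup _)
      (fun k => hdown _) 1
  have hF_meas : MeasurableSet[⨆ i ∈ Set.range ((↑) : ℕ → ℤ),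
      MeasurableSpace.comap (X i) inferInstance] F :=
    measurableSet_exists_sum_range_le
      (fun k => measurable_iSup_comap (X := X) (Set.mem_range_self k)) Nat.succ 0
  have hB_meas : MeasurableSet[⨆ i ∈ Set.range fun k : ℕ => -1 - (k : ℤ),
      MeasurableSpace.comap (X i) inferInstance] B :=
    measurableSet_exists_sum_range_le
      (fun k => measurable_iSup_comap (X := X) (Set.mem_range_self k)) id (-1)
  have hle (U : Set ℤ) :
      ⨆ i ∈ U, MeasurableSpace.comap (X i) inferInstance ≤ ‹MeasurableSpace Ω› :=
    iSup₂_le fun i _ => (hmeas i).comap_le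
  have hdisj : Disjoint (Set.range ((↑) : ℕ → ℤ)) (Set.range fun k : ℕ => -1 - (k : ℤ)) := by
    rw [Set.disjoint_left]
    rintro _ ⟨a, rfl⟩ ⟨b, hb⟩
    dsimp only at hb
    omega
  have hgood : Fᶜ ∩ Bᶜ ⊆ {ω | IsPivot (fun k => X k ω) 0} := by
    rintro ω ⟨hωF, hωB⟩
    refine isPivot_zero_of_forall_sum_pos _ (fun n => ?_) (fun n => ?_)
    · by_contra h; exact hωF ⟨n, by omega⟩
    · by_contra h; exact hωB ⟨n, by omega⟩
  calc (1 - 2 * p) * (1 - ρ) ≤ μ Fᶜ * μ Bᶜ := by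
        rw [prob_compl_eq_one_sub (hle _ F hF_meas), prob_compl_eq_one_sub (hle _ B hB_meas)]
        gcongr
    _ = μ (Fᶜ ∩ Bᶜ) :=
        (hindep.measure_inter_eq_mul_of_disjoint hmeas hdisj hF_meas.compl hB_meas.compl).symm
    _ ≤ _ := measure_mono hgood

/-- For i.i.d. ±1 variables indexed by `ℤ` with `P(X k = 1) = 1 − β`,
`P(X k = −1) = β`, `β ∈ [0, 1/2)`, the probability that index `0` is a pivot is at
least `(1 − 2β)²`; in particular it is strictly positive. -/
theorem pivot_prob_lower_bound
    {Ω : Type*} [MeasurableSpace Ω] (μ : Measure Ω) [IsProbabilityMeasure μ]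
    (β : ℝ) (hβ : β ∈ Set.Ico (0 : ℝ) (1 / 2))
    (X : ℤ → Ω → ℤ) (hmeas : ∀ k, Measurable (X k))
    (hindep : iIndepFun X μ)
    (hup : ∀ k, μ {ω | X k ω = 1} = ENNReal.ofReal (1 - β))
    (hdown : ∀ k, μ {ω | X k ω = -1} = ENNReal.ofReal β) :
    (1 - 2 * β) ^ 2 ≤ (μ {ω | IsPivot (fun k => X k ω) 0}).toReal
    ∧ 0 < μ {ω | IsPivot (fun k => X k ω) 0} := by
  obtain ⟨hβ0, hβ2⟩ := hβ
  have hpq : ENNReal.ofReal β + ENNReal.ofReal (1 - β) = 1 := by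
    rw [← ENNReal.ofReal_add hβ0 (by linarith)]
    simp
  have hρ : ENNReal.ofReal (1 - β) * ENNReal.ofReal (β / (1 - β)) = ENNReal.ofReal β := by
    rw [← ENNReal.ofReal_mul (by linarith), mul_div_cancel₀ _ (by linarith)]
  have hρ_le : ENNReal.ofReal (β / (1 - β)) ≤ 2 * ENNReal.ofReal β := by
    rw [← ENNReal.ofReal_ofNat 2, ← ENNReal.ofReal_mul zero_le_two]
    exact ENNReal.ofReal_le_ofReal <| (div_le_iff₀ (by linarith)).2 (by nlinarith)
  have h_one_sub : 1 - 2 * ENNReal.ofReal β = ENNReal.ofReal (1 - 2 * β) := by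
    rw [ENNReal.ofReal_sub _ (by positivity), ENNReal.ofReal_one, ENNReal.ofReal_mul zero_le_two,
      ENNReal.ofReal_ofNat]
  have hbound : ENNReal.ofReal ((1 - 2 * β) ^ 2) ≤ μ {ω | IsPivot (fun k => X k ω) 0} :=
    calc ENNReal.ofReal ((1 - 2 * β) ^ 2)
        = (1 - 2 * ENNReal.ofReal β) * (1 - 2 * ENNReal.ofReal β) := by
          rw [sq, ENNReal.ofReal_mul (by linarith), h_one_sub]
      _ ≤ (1 - 2 * ENNReal.ofReal β) * (1 - ENNReal.ofReal (β / (1 - β))) := by gcongr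
      _ ≤ _ := measure_isPivot_zero_ge hmeas hindep hpq hρ hup hdown
  have hpos : 0 < (1 - 2 * β) ^ 2 := pow_pos (by linarith) 2
  exact ⟨(ENNReal.ofReal_le_iff_le_toReal (measure_ne_top _ _)).1 hbound,
    (ENNReal.ofReal_pos.2 hpos).trans_le hbound⟩
end

section
/- Fix an integer k ≥ 1. Let T_win be the index of the k-th trial i with X_i = 1 (the k-th adversary block) and T_lose the index of the k-th trial i with X_i = 0 (the k-th honest chain-growth event). Then P(T_win < T_lose) = P( Σ_{i=1}^{2k−1} X_i ≥ k ) ≤ exp( −2(2k−1)(1/2 − p)² ). That is, the probability that an adversary with block production rate below the honest chain growth rate builds a chain of length k before the honest chain reaches length k is exponentially small in k. -/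
/-!
Among the first `2k - 1` trials one side has at least `k` events and the other at most `k - 1`,
and the side with at least `k` is the one that gets to `k` first. This needs both sides to reach
`k` eventually, which happens almost surely by the second Borel–Cantelli lemma, since each side
has a constant positive probability per trial. The tail bound is Hoeffding's inequality for the
`2k - 1` centred `[0, 1]`-valued trials at deviation `k - (2k - 1)p ≥ (2k - 1)(1/2 - p)`.
-/

open MeasureTheory ProbabilityTheory Finset Filter
open scoped ENNReal

def countIcc (P : ℕ → Prop) [DecidablePred P] (n : ℕ) : ℕ := #{i ∈ Icc 1 n | P i}

/-- Junk value `0` (from `sInf ∅`) when `P` holds fewer than `k` times in total. -/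
noncomputable def hitTime (P : ℕ → Prop) [DecidablePred P] (k : ℕ) : ℕ :=
  sInf {n | k ≤ countIcc P n}

section Counting

variable {P Q : ℕ → Prop} [DecidablePred P] [DecidablePred Q]

lemma countIcc_mono : Monotone (countIcc P) := fun _ _ h =>
  card_le_card (filter_subset_filter _ (Icc_subset_Icc_right h))

lemma countIcc_lt_countIcc {m n : ℕ} (hmn : m < n) (hn : P n) : countIcc P m < countIcc P n := by
  refine card_lt_card ⟨filter_subset_filter _ (Icc_subset_Icc_right hmn.le), fun h => ?_⟩
  have := h (mem_filter.2 ⟨mem_Icc.2 ⟨by omega, le_rfl⟩, hn⟩)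
  simp only [mem_filter, mem_Icc] at this
  omega

lemma countIcc_add_countIcc_of_iff_not (hPQ : ∀ i, Q i ↔ ¬P i) (n : ℕ) :
    countIcc P n + countIcc Q n = n := by
  simp only [countIcc, hPQ, card_filter_add_card_filter_not, Nat.card_Icc, add_tsub_cancel_right]

lemma exists_le_countIcc_of_frequently (hP : ∃ᶠ i in atTop, P i) (k : ℕ) :
    ∃ n, k ≤ countIcc P n := by
  induction k with
  | zero => exact ⟨0, Nat.zero_le _⟩
  | succ k ih =>
    obtain ⟨n, hn⟩ := ih
    obtain ⟨m, hnm, hm⟩ := frequently_atTop.1 hP (n + 1)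
    exact ⟨m, hn.trans_lt (countIcc_lt_countIcc hnm hm)⟩

lemma hitTime_le_iff {k : ℕ} (hP : ∃ n, k ≤ countIcc P n) {n : ℕ} :
    hitTime P k ≤ n ↔ k ≤ countIcc P n :=
  ⟨fun h => le_trans (Nat.sInf_mem (s := {n | k ≤ countIcc P n}) hP) (countIcc_mono h),
    fun h => Nat.sInf_le h⟩

lemma hitTime_lt_hitTime_iff {k : ℕ} (hk : 1 ≤ k) (hPQ : ∀ i, Q i ↔ ¬P i)
    (hP : ∃ n, k ≤ countIcc P n) (hQ : ∃ n, k ≤ countIcc Q n) :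
    hitTime P k < hitTime Q k ↔ k ≤ countIcc P (2 * k - 1) := by
  have hsplit := countIcc_add_countIcc_of_iff_not hPQ (2 * k - 1)
  have hPle := hitTime_le_iff hP (n := 2 * k - 1)
  have hQle := hitTime_le_iff hQ (n := 2 * k - 1)
  omega

end Counting

lemma sum_eq_card_filter_eq_one {ι : Type*} {s : Finset ι} {f : ι → ℕ}
    (hf : ∀ i ∈ s, f i = 0 ∨ f i = 1) : ∑ i ∈ s, f i = #{i ∈ s | f i = 1} := by
  rw [card_filter]
  refine sum_congr rfl fun i hi => ?_
  rcases hf i hi with h | h <;> simp [h]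

section Probability

variable {Ω : Type*} [MeasurableSpace Ω] {μ : Measure Ω}

lemma ae_frequently_mem_of_iIndepFun {β : Type*} [MeasurableSpace β] {X : ℕ → Ω → β}
    (hX : ∀ i, Measurable (X i)) (hind : iIndepFun X μ) {S : Set β} (hS : MeasurableSet S)
    (hsum : ∑' i, μ (X i ⁻¹' S) = ⊤) : ∀ᵐ ω ∂μ, ∃ᶠ i in atTop, X i ω ∈ S := by
  have := hind.isProbabilityMeasure
  have hsets : iIndepSet (fun i => X i ⁻¹' S) μ :=
    (iIndepSet_iff_meas_biInter fun i => hX i hS).2 fun s =>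
      hind.measure_inter_preimage_eq_mul s fun _ _ => hS
  have hlimsup := measure_limsup_eq_one (fun i => hX i hS) hsets hsum
  rw [← prob_compl_eq_zero_iff (MeasurableSet.measurableSet_limsup fun i => hX i hS)] at hlimsup
  filter_upwards [measure_eq_zero_iff_ae_notMem.1 hlimsup] with ω hω
  rwa [Set.mem_compl_iff, mem_limsup_iff_frequently_mem, not_not] at hω

lemma ae_frequently_eq_of_iIndepFun {β : Type*} [MeasurableSpace β] [MeasurableSingletonClass β]
    {X : ℕ → Ω → β} (hX : ∀ i, Measurable (X i)) (hind : iIndepFun X μ) {v : β} {r : ℝ≥0∞}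
    (hr : r ≠ 0) (hv : ∀ i, μ {ω | X i ω = v} = r) : ∀ᵐ ω ∂μ, ∃ᶠ i in atTop, X i ω = v :=
  ae_frequently_mem_of_iIndepFun hX hind (measurableSet_singleton v) <| by
    simp only [Set.preimage, Set.mem_singleton_iff, hv]
    exact ENNReal.tsum_const_eq_top_of_ne_zero hr

lemma measure_sum_ge_le_of_mem_Icc_zero_one {ι : Type*} {Y : ι → Ω → ℝ}
    (hY : ∀ i, Measurable (Y i)) (hind : iIndepFun Y μ)
    (hbound : ∀ i, ∀ᵐ ω ∂μ, Y i ω ∈ Set.Icc 0 1) (s : Finset ι) {t : ℝ} (ht : 0 ≤ t) :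
    μ.real {ω | t ≤ ∑ i ∈ s, (Y i ω - μ[Y i])} ≤ Real.exp (-2 * t ^ 2 / #s) := by
  have := hind.isProbabilityMeasure
  have hsub (i : ι) (_ : i ∈ s) : HasSubgaussianMGF (fun ω => Y i ω - μ[Y i]) (1 / 4) μ := by
    convert hasSubgaussianMGF_of_mem_Icc (hY i).aemeasurable (hbound i)
    norm_num
  have hcent : iIndepFun (fun i => (fun x => x - μ[Y i]) ∘ Y i) μ :=
    hind.comp (fun i x => x - μ[Y i]) fun _ => by fun_prop
  refine (HasSubgaussianMGF.measure_sum_ge_le_of_iIndepFun hcent hsub ht).trans_eq ?_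
  rw [sum_const, nsmul_eq_mul]
  push_cast
  ring_nf

lemma measure_sum_ge_le_of_bernoulli {ι : Type*} {X : ι → Ω → ℕ} (hX : ∀ i, Measurable (X i))
    (hind : iIndepFun X μ) (hval : ∀ i ω, X i ω = 0 ∨ X i ω = 1) {p : ℝ} (hp : 0 ≤ p)
    (hone : ∀ i, μ {ω | X i ω = 1} = ENNReal.ofReal p) (s : Finset ι) {m : ℝ}
    (hm : #s * p ≤ m) :
    μ {ω | m ≤ ∑ i ∈ s, (X i ω : ℝ)} ≤ ENNReal.ofReal (Real.exp (-2 * (m - #s * p) ^ 2 / #s)) := by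
  have := hind.isProbabilityMeasure
  have hY (i : ι) : Measurable fun ω => (X i ω : ℝ) := by fun_prop
  have hmean (i : ι) : μ[fun ω => (X i ω : ℝ)] = p := by
    have hind_one : (fun ω => (X i ω : ℝ)) = {ω | X i ω = 1}.indicator 1 := by
      ext ω
      rcases hval i ω with h | h <;> simp [h]
    have hmeas : MeasurableSet {ω | X i ω = 1} := hX i (measurableSet_singleton 1)
    rw [hind_one, integral_indicator_one hmeas, measureReal_def,
      hone i, ENNReal.toReal_ofReal hp]
  have hbound (i : ι) : ∀ᵐ ω ∂μ, (X i ω : ℝ) ∈ Set.Icc 0 1 :=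
    ae_of_all _ fun ω => by rcases hval i ω with h | h <;> simp [h]
  have hhoeff := measure_sum_ge_le_of_mem_Icc_zero_one hY
    (hind.comp (fun _ x => (x : ℝ)) fun _ => measurable_from_nat) hbound s (sub_nonneg.2 hm)
  rw [← ENNReal.ofReal_toReal (measure_ne_top μ _)]
  refine ENNReal.ofReal_le_ofReal (le_trans (le_of_eq ?_) hhoeff)
  simp only [hmean, sum_sub_distrib, sum_const, nsmul_eq_mul, le_sub_iff_add_le, sub_add_cancel]
  rfl

lemma race_exponent_le {k p : ℝ} (hk : 1 ≤ k) (hp : p ≤ 1 / 2) :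
    -2 * (k - (2 * k - 1) * p) ^ 2 / (2 * k - 1) ≤ -2 * (2 * k - 1) * (1 / 2 - p) ^ 2 := by
  have hn : 0 < 2 * k - 1 := by linarith
  have hgap : 0 ≤ (2 * k - 1) * (1 / 2 - p) := mul_nonneg hn.le (by linarith)
  rw [div_le_iff₀ hn]
  nlinarith

lemma measure_majority_le_exp {X : ℕ → Ω → ℕ} (hX : ∀ i, Measurable (X i))
    (hind : iIndepFun X μ) (hval : ∀ i ω, X i ω = 0 ∨ X i ω = 1) {p : ℝ} (hp0 : 0 ≤ p)
    (hp : p ≤ 1 / 2) (hone : ∀ i, μ {ω | X i ω = 1} = ENNReal.ofReal p) {k : ℕ} (hk : 1 ≤ k) :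
    μ {ω | k ≤ ∑ i ∈ Icc 1 (2 * k - 1), X i ω}
      ≤ ENNReal.ofReal (Real.exp (-2 * (2 * (k : ℝ) - 1) * (1 / 2 - p) ^ 2)) := by
  have hn : (#(Icc 1 (2 * k - 1)) : ℝ) = 2 * k - 1 := by
    rw [Nat.card_Icc, add_tsub_cancel_right, Nat.cast_sub (by omega)]
    push_cast
    ring
  have hk' : (1 : ℝ) ≤ k := by exact_mod_cast hk
  calc μ {ω | k ≤ ∑ i ∈ Icc 1 (2 * k - 1), X i ω}
      = μ {ω | (k : ℝ) ≤ ∑ i ∈ Icc 1 (2 * k - 1), (X i ω : ℝ)} := by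
        simp_rw [← Nat.cast_sum, Nat.cast_le]
    _ ≤ _ := measure_sum_ge_le_of_bernoulli hX hind hval hp0 hone _ (by rw [hn]; nlinarith)
    _ ≤ _ := by
      rw [hn]
      gcongr
      exact race_exponent_le hk' hp

end Probability

/-- Let `(X i)` be i.i.d. Bernoulli(`p`) trials with `p ∈ (0, 1/2)`, where `X i = 1`
is an adversary block production event and `X i = 0` an honest chain-growth event.
Let `Twin` be the index of the `k`-th trial with `X i = 1` and `Tlose` that of the
`k`-th trial with `X i = 0`. Then
`P(Twin < Tlose) = P(∑_{i=1}^{2k−1} X i ≥ k) ≤ exp(−2(2k−1)(1/2 − p)²)`: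
the probability that the adversary builds a chain of length `k` before the honest
chain reaches length `k` is exponentially small in `k`. -/
theorem adversary_race_bound
    {Ω : Type*} [MeasurableSpace Ω] (μ : Measure Ω) [IsProbabilityMeasure μ]
    (p : ℝ) (hp : p ∈ Set.Ioo (0 : ℝ) (1 / 2))
    (X : ℕ → Ω → ℕ) (hmeas : ∀ i, Measurable (X i))
    (hval : ∀ i ω, X i ω = 0 ∨ X i ω = 1)
    (hindep : iIndepFun X μ)
    (hone : ∀ i, μ {ω | X i ω = 1} = ENNReal.ofReal p)
    (k : ℕ) (hk : 1 ≤ k)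
    (Twin Tlose : Ω → ℕ)
    (hTwin : ∀ ω, Twin ω =
      sInf {n : ℕ | k ≤ ((Finset.Icc 1 n).filter (fun i => X i ω = 1)).card})
    (hTlose : ∀ ω, Tlose ω =
      sInf {n : ℕ | k ≤ ((Finset.Icc 1 n).filter (fun i => X i ω = 0)).card}) :
    μ {ω | Twin ω < Tlose ω}
        = μ {ω | k ≤ ∑ i ∈ Finset.Icc 1 (2 * k - 1), X i ω}
    ∧ μ {ω | Twin ω < Tlose ω}
        ≤ ENNReal.ofReal (Real.exp (-2 * (2 * (k : ℝ) - 1) * (1 / 2 - p) ^ 2)) := by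
  obtain ⟨hp0, hp1⟩ := hp
  have hzero (i : ℕ) : μ {ω | X i ω = 0} = 1 - ENNReal.ofReal p := by
    have hcompl : {ω | X i ω = 0} = {ω | X i ω = 1}ᶜ := by
      ext ω
      rcases hval i ω with h | h <;> simp [h]
    rw [hcompl, prob_compl_eq_one_sub (s := {ω | X i ω = 1}) (hmeas i (measurableSet_singleton 1)),
      hone i]
  have hones := ae_frequently_eq_of_iIndepFun hmeas hindep (by simpa using hp0) hone
  have hzeros := ae_frequently_eq_of_iIndepFun hmeas hindep
    (tsub_pos_of_lt (ENNReal.ofReal_lt_one.2 (by linarith))).ne' hzero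
  have hrace : μ {ω | Twin ω < Tlose ω} = μ {ω | k ≤ ∑ i ∈ Icc 1 (2 * k - 1), X i ω} := by
    refine measure_congr (eventuallyEq_set.2 ?_)
    filter_upwards [hones, hzeros] with ω h1 h0
    rw [hTwin, hTlose, sum_eq_card_filter_eq_one fun i _ => hval i ω]
    exact hitTime_lt_hitTime_iff hk (fun i => by rcases hval i ω with h | h <;> simp [h])
      (exists_le_countIcc_of_frequently h1 k) (exists_le_countIcc_of_frequently h0 k)
  exact ⟨hrace, hrace.trans_le (measure_majority_le_exp hmeas hindep hval hp0.le hp1.le hone hk)⟩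
end
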